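/- arXiv:2410.23617 — 5 statements merged into one kernel-verified Lean document; each statement's English description precedes it below -/
import Mathlib

section
/- Let s_1, s_2 be vertices of a weighted directed graph with no negative cycles, let H \ge 1, and suppose that for some h with 2^i - H/2 \le h \le 2^i + H/2 there exist a vertex x and indices j, h-j both in [2^{i-1}-H/2, 2^{i-1}+H/2] such that every simple path achieving d_{\le h}(s_1,s_2) admits such a split through x with the first part having at most j edges and the second at most h-j edges. Then d_{\le h}(s_1,s_2) = min over j in [2^{i-1}-H/2, 2^{i-1}+H/2] with h-j in the same range, and over vertices x in the hitting set, of d_{\le j}(s_1,x) + d_{\le h-j}(x,s_2). -/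
open scoped BigOperators

/-- A walk with exactly `k` edges from `s` to `t` in the directed graph with
edge relation `E`, given by its vertex sequence `p`. -/
def IsWalk {V : Type*} (E : V → V → Prop) (k : ℕ) (p : ℕ → V) (s t : V) : Prop :=
  p 0 = s ∧ p k = t ∧ ∀ i < k, E (p i) (p (i + 1))

/-- Total weight of the first `k` edges of the vertex sequence `p`. -/
noncomputable def walkWeight {V : Type*} (w : V → V → ℝ) (k : ℕ) (p : ℕ → V) : ℝ :=
  ∑ i ∈ Finset.range k, w (p i) (p (i + 1))

/-- `dExact E w h s t` : minimum weight of a walk from `s` to `t` with exactly `h` edges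
(`⊤` if none exists). -/
noncomputable def dExact {V : Type*} (E : V → V → Prop) (w : V → V → ℝ)
    (h : ℕ) (s t : V) : EReal :=
  sInf {x : EReal | ∃ p : ℕ → V, IsWalk E h p s t ∧ x = (walkWeight w h p : ℝ)}

/-- `dLe E w h s t` : minimum weight of a walk from `s` to `t` with at most `h` edges
(`⊤` if none exists). -/
noncomputable def dLe {V : Type*} (E : V → V → Prop) (w : V → V → ℝ)
    (h : ℕ) (s t : V) : EReal :=
  sInf {x : EReal | ∃ k ≤ h, ∃ p : ℕ → V, IsWalk E k p s t ∧ x = (walkWeight w k p : ℝ)}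

/-- The graph has no negative-weight cycles. -/
def NoNegCycle {V : Type*} (E : V → V → Prop) (w : V → V → ℝ) : Prop :=
  ∀ (v : V) (k : ℕ), 0 < k → ∀ p : ℕ → V, IsWalk E k p v v → 0 ≤ walkWeight w k p

lemma dLe_le {V : Type*} (E : V → V → Prop) (w : V → V → ℝ) {h k : ℕ} (hk : k ≤ h)
    {p : ℕ → V} {s t : V} (hp : IsWalk E k p s t) :
    dLe E w h s t ≤ ((walkWeight w k p : ℝ) : EReal) :=
  sInf_le ⟨k, hk, p, hp, rfl⟩

open Fin.NatCast in
lemma dLe_finite {V : Type*} [Fintype V] (E : V → V → Prop) (w : V → V → ℝ) (h : ℕ) (s t : V) :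
    {x : EReal | ∃ k ≤ h, ∃ p : ℕ → V, IsWalk E k p s t ∧ x = (walkWeight w k p : ℝ)}.Finite := by
  classical
  apply Set.Finite.subset (Set.finite_range
    (fun q : Fin (h+1) × (Fin (h+1) → V) =>
      ((∑ i ∈ Finset.range q.1.1, w (q.2 (i : Fin (h+1))) (q.2 ((i+1 : ℕ) : Fin (h+1))) : ℝ) : EReal)))
  rintro x ⟨k, hk, p, hp, rfl⟩
  refine ⟨⟨⟨k, by omega⟩, fun i => p i.1⟩, ?_⟩
  simp only [walkWeight]
  norm_cast
  apply Finset.sum_congr rfl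
  intro i hi
  simp only [Finset.mem_range] at hi
  rw [Fin.val_cast_of_lt (by omega : i < h+1), Fin.val_cast_of_lt (by omega : i+1 < h+1)]

lemma dLe_cases {V : Type*} [Fintype V] (E : V → V → Prop) (w : V → V → ℝ) (h : ℕ) (s t : V) :
    dLe E w h s t = ⊤ ∨ ∃ k ≤ h, ∃ p : ℕ → V, IsWalk E k p s t ∧
      dLe E w h s t = ((walkWeight w k p : ℝ) : EReal) := by
  by_cases hne : {x : EReal | ∃ k ≤ h, ∃ p : ℕ → V, IsWalk E k p s t ∧
      x = (walkWeight w k p : ℝ)}.Nonempty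
  · right
    have := hne.csInf_mem (dLe_finite E w h s t)
    obtain ⟨k, hk, p, hp, hw⟩ := this
    exact ⟨k, hk, p, hp, hw⟩
  · left
    rw [Set.not_nonempty_iff_eq_empty] at hne
    rw [dLe, hne, sInf_empty]

lemma exists_simple {V : Type*} {E : V → V → Prop} {w : V → V → ℝ} (hG : NoNegCycle E w) :
    ∀ (k : ℕ) (p : ℕ → V) (s t : V), IsWalk E k p s t →
      ∃ k' ≤ k, ∃ q : ℕ → V, IsWalk E k' q s t ∧
        Function.Injective (fun i : Fin (k'+1) => q i) ∧
        walkWeight w k' q ≤ walkWeight w k p := by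
  intro k
  induction k using Nat.strong_induction_on with
  | _ k ih =>
    intro p s t hp
    by_cases hinj : Function.Injective (fun i : Fin (k+1) => p i)
    · exact ⟨k, le_rfl, p, hp, hinj, le_rfl⟩
    · rw [Function.not_injective_iff] at hinj
      obtain ⟨i0, j0, hpe, hne⟩ := hinj
      obtain ⟨i, j, hij, hpij⟩ : ∃ i j : Fin (k+1), i.1 < j.1 ∧ p i.1 = p j.1 := by
        rcases lt_or_gt_of_ne (fun hv : i0.1 = j0.1 => hne (Fin.ext hv)) with hlt | hgt
        · exact ⟨i0, j0, hlt, hpe⟩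
        · exact ⟨j0, i0, hgt, hpe.symm⟩
      set d := j.1 - i.1 with hd
      have hdpos : 0 < d := by omega
      have hjk : j.1 ≤ k := by omega
      set q : ℕ → V := fun n => if n ≤ i.1 then p n else p (n + d) with hq
      set k' := k - d with hk'
      have hik' : i.1 ≤ k' := by omega
      have hidj : i.1 + d = j.1 := by omega
      have hqwalk : IsWalk E k' q s t := by
        refine ⟨?_, ?_, ?_⟩
        · simp only [hq]; rw [if_pos (Nat.zero_le _)]; exact hp.1
        · simp only [hq]
          by_cases hki : k' ≤ i.1
          · rw [if_pos hki]
            have h1 : k' = i.1 := le_antisymm hki hik'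
            have hjk' : j.1 = k := by omega
            rw [h1, hpij, hjk']; exact hp.2.1
          · rw [if_neg hki]
            have h1 : k' + d = k := by omega
            rw [h1]; exact hp.2.1
        · intro m hm
          simp only [hq]
          rcases lt_trichotomy m i.1 with h1 | h1 | h1
          · rw [if_pos (by omega), if_pos (by omega)]
            exact hp.2.2 m (by omega)
          · rw [if_pos (by omega), if_neg (by omega), h1, hpij, ← hidj]
            have := hp.2.2 (i.1 + d) (by omega)
            rwa [show i.1 + 1 + d = i.1 + d + 1 by omega]
          · rw [if_neg (by omega), if_neg (by omega),
              show m + 1 + d = m + d + 1 by omega]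
            exact hp.2.2 (m + d) (by omega)
      have hcyc : 0 ≤ ∑ m ∈ Finset.Ico i.1 j.1, w (p m) (p (m+1)) := by
        have hcw : IsWalk E d (fun n => p (n + i.1)) (p i.1) (p i.1) := by
          refine ⟨by simp, ?_, ?_⟩
          · show p (d + i.1) = p i.1
            rw [show d + i.1 = j.1 by omega]; exact hpij.symm
          · intro n hn
            show E (p (n + i.1)) (p (n + 1 + i.1))
            rw [show n + 1 + i.1 = n + i.1 + 1 by omega]
            exact hp.2.2 (n + i.1) (by omega)
        have h0 := hG (p i.1) d hdpos _ hcw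
        simp only [walkWeight] at h0
        rw [Finset.sum_Ico_eq_sum_range, ← hd]
        have heq : ∑ n ∈ Finset.range d, w (p (i.1+n)) (p (i.1+n+1))
            = ∑ n ∈ Finset.range d, w (p (n+i.1)) (p (n+1+i.1)) :=
          Finset.sum_congr rfl (fun n _ => by rw [add_comm i.1 n, show n+1+i.1 = n+i.1+1 by omega])
        rw [heq]; exact h0
      have hwq : walkWeight w k' q ≤ walkWeight w k p := by
        have hsplit : walkWeight w k p =
            (∑ m ∈ Finset.Ico 0 i.1, w (p m) (p (m+1)))
            + (∑ m ∈ Finset.Ico i.1 j.1, w (p m) (p (m+1)))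
            + (∑ m ∈ Finset.Ico j.1 k, w (p m) (p (m+1))) := by
          rw [walkWeight, Finset.range_eq_Ico,
            ← Finset.sum_Ico_consecutive _ (Nat.zero_le j.1) hjk,
            ← Finset.sum_Ico_consecutive _ (Nat.zero_le i.1) (le_of_lt hij)]
        have hqsplit : walkWeight w k' q =
            (∑ m ∈ Finset.Ico 0 i.1, w (p m) (p (m+1)))
            + (∑ m ∈ Finset.Ico j.1 k, w (p m) (p (m+1))) := by
          rw [walkWeight, Finset.range_eq_Ico,
            ← Finset.sum_Ico_consecutive _ (Nat.zero_le i.1) hik']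
          congr 1
          · apply Finset.sum_congr rfl
            intro m hm
            simp only [Finset.mem_Ico] at hm
            simp only [hq]
            rw [if_pos (by omega), if_pos (by omega)]
          · rw [Finset.sum_Ico_eq_sum_range, Finset.sum_Ico_eq_sum_range,
              show k' - i.1 = k - j.1 by omega]
            apply Finset.sum_congr rfl
            intro m hm
            simp only [Finset.mem_range] at hm
            simp only [hq]
            rcases Nat.eq_zero_or_pos m with h0 | h0
            · subst h0
              simp only [Nat.add_zero]
              rw [if_pos le_rfl, if_neg (by omega), hpij,
                show i.1 + 1 + d = j.1 + 1 by omega]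
            · rw [if_neg (by omega), if_neg (by omega),
                show i.1 + m + d = j.1 + m by omega,
                show i.1 + m + 1 + d = j.1 + m + 1 by omega]
        rw [hsplit, hqsplit]; linarith
      obtain ⟨k'', hk'', q', hq', hinj', hw'⟩ := ih k' (by omega) q s t hqwalk
      exact ⟨k'', by omega, q', hq', hinj', le_trans hw' hwq⟩

lemma walk_concat {V : Type*} {E : V → V → Prop} (w : V → V → ℝ) {k₁ k₂ : ℕ}
    {p₁ p₂ : ℕ → V} {s x t : V} (h₁ : IsWalk E k₁ p₁ s x) (h₂ : IsWalk E k₂ p₂ x t) :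
    IsWalk E (k₁ + k₂) (fun n => if n < k₁ then p₁ n else p₂ (n - k₁)) s t ∧
      walkWeight w (k₁ + k₂) (fun n => if n < k₁ then p₁ n else p₂ (n - k₁))
        = walkWeight w k₁ p₁ + walkWeight w k₂ p₂ := by
  set q : ℕ → V := fun n => if n < k₁ then p₁ n else p₂ (n - k₁) with hqdef
  have hqk₁ : ∀ n ≤ k₁, q n = p₁ n := by
    intro n hn
    rcases lt_or_eq_of_le hn with hlt | heq
    · simp only [hqdef]; rw [if_pos hlt]
    · subst heq
      simp only [hqdef]
      rw [if_neg (lt_irrefl _), Nat.sub_self]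
      rw [h₂.1, h₁.2.1]
  have hqk₂ : ∀ n, q (k₁ + n) = p₂ n := by
    intro n
    rcases Nat.eq_zero_or_pos n with h0 | h0
    · subst h0
      rw [Nat.add_zero, hqk₁ k₁ le_rfl, h₁.2.1, h₂.1]
    · simp only [hqdef]
      rw [if_neg (by omega), Nat.add_sub_cancel_left]
  constructor
  · refine ⟨?_, ?_, ?_⟩
    · rw [hqk₁ 0 (Nat.zero_le _)]; exact h₁.1
    · rw [show k₁ + k₂ = k₁ + k₂ from rfl, hqk₂ k₂]; exact h₂.2.1
    · intro m hm
      by_cases hmk : m + 1 ≤ k₁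
      · rw [hqk₁ m (by omega), hqk₁ (m+1) hmk]
        exact h₁.2.2 m (by omega)
      · rw [show m = k₁ + (m - k₁) by omega, hqk₂ (m - k₁),
          show k₁ + (m - k₁) + 1 = k₁ + (m - k₁ + 1) by omega, hqk₂ (m - k₁ + 1)]
        exact h₂.2.2 (m - k₁) (by omega)
  · rw [walkWeight, Finset.sum_range_add]
    congr 1
    · apply Finset.sum_congr rfl
      intro m hm
      simp only [Finset.mem_range] at hm
      rw [hqk₁ m (by omega), hqk₁ (m+1) (by omega)]
    · apply Finset.sum_congr rfl
      intro m hm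
      rw [hqk₂ m, show k₁ + m + 1 = k₁ + (m + 1) by omega, hqk₂ (m+1)]

lemma walk_prefix {V : Type*} {E : V → V → Prop} {k m : ℕ} {p : ℕ → V} {s t : V}
    (hp : IsWalk E k p s t) (hm : m ≤ k) : IsWalk E m p s (p m) :=
  ⟨hp.1, rfl, fun i hi => hp.2.2 i (by omega)⟩

lemma walk_suffix {V : Type*} {E : V → V → Prop} {k m : ℕ} {p : ℕ → V} {s t : V}
    (hp : IsWalk E k p s t) (hm : m ≤ k) :
    IsWalk E (k - m) (fun n => p (n + m)) (p m) t := by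
  refine ⟨by simp, ?_, ?_⟩
  · show p (k - m + m) = t
    rw [show k - m + m = k by omega]; exact hp.2.1
  · intro i hi
    show E (p (i + m)) (p (i + 1 + m))
    rw [show i + 1 + m = i + m + 1 by omega]
    exact hp.2.2 (i + m) (by omega)

lemma walkWeight_split {V : Type*} (w : V → V → ℝ) {k m : ℕ} (p : ℕ → V) (hm : m ≤ k) :
    walkWeight w k p = walkWeight w m p + walkWeight w (k - m) (fun n => p (n + m)) := by
  simp only [walkWeight]
  have h1 : ∑ i ∈ Finset.range k, w (p i) (p (i+1))
      = ∑ i ∈ Finset.range (m + (k - m)), w (p i) (p (i+1)) := by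
    rw [Nat.add_sub_cancel' hm]
  rw [h1, Finset.sum_range_add]
  congr 1
  apply Finset.sum_congr rfl
  intro i _
  show w (p (m+i)) (p (m+i+1)) = w (p (i+m)) (p (i+1+m))
  rw [add_comm m i, show i+m+1 = i+1+m by omega]


theorem stmt9 {V : Type*} [Fintype V] (E : V → V → Prop) (w : V → V → ℝ)
    (hG : NoNegCycle E w) (S : Set V) (s₁ s₂ : V) (h a b : ℕ)
    (hsplit : ∀ k ≤ h, ∀ p : ℕ → V, IsWalk E k p s₁ s₂ →
      Function.Injective (fun i : Fin (k + 1) => p i) →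
      ((walkWeight w k p : ℝ) : EReal) = dLe E w h s₁ s₂ →
      ∃ m ≤ k, p m ∈ S ∧ ∃ j : ℕ, a ≤ j ∧ j ≤ b ∧ j ≤ h ∧
        a ≤ h - j ∧ h - j ≤ b ∧ m ≤ j ∧ k - m ≤ h - j) :
    dLe E w h s₁ s₂ =
      ⨅ (j : ℕ) (_ : a ≤ j ∧ j ≤ b ∧ j ≤ h ∧ a ≤ h - j ∧ h - j ≤ b)
        (x : V) (_ : x ∈ S),
        dLe E w j s₁ x + dLe E w (h - j) x s₂ := by
  apply le_antisymm
  · -- easy direction: dLe ≤ every split value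
    refine le_iInf fun j => le_iInf fun hj => le_iInf fun x => le_iInf fun _ => ?_
    obtain ⟨haj, hjb, hjh, hahj, hhjb⟩ := hj
    rcases dLe_cases E w j s₁ x with h1 | ⟨k₁, hk₁, p₁, hw₁, he₁⟩
    · rcases dLe_cases E w (h - j) x s₂ with h2 | ⟨k₂, hk₂, p₂, hw₂, he₂⟩
      · rw [h1, h2]; simp
      · rw [h1, he₂, EReal.top_add_coe]; exact le_top
    · rcases dLe_cases E w (h - j) x s₂ with h2 | ⟨k₂, hk₂, p₂, hw₂, he₂⟩
      · rw [he₁, h2, EReal.coe_add_top]; exact le_top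
      · rw [he₁, he₂, ← EReal.coe_add]
        obtain ⟨hcw, hcwt⟩ := walk_concat w hw₁ hw₂
        calc dLe E w h s₁ s₂
            ≤ ((walkWeight w (k₁ + k₂)
                (fun n => if n < k₁ then p₁ n else p₂ (n - k₁)) : ℝ) : EReal) :=
              dLe_le E w (by omega) hcw
          _ = ((walkWeight w k₁ p₁ + walkWeight w k₂ p₂ : ℝ) : EReal) := by rw [hcwt]
  · -- hard direction
    rcases dLe_cases E w h s₁ s₂ with h0 | ⟨k, hk, p, hw, he⟩
    · rw [h0]; exact le_top
    · obtain ⟨k', hk', q, hqw, hqinj, hqle⟩ := exists_simple hG k p s₁ s₂ hw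
      have hled : dLe E w h s₁ s₂ ≤ ((walkWeight w k' q : ℝ) : EReal) :=
        dLe_le E w (le_trans hk' hk) hqw
      have heq : ((walkWeight w k' q : ℝ) : EReal) = dLe E w h s₁ s₂ := by
        refine le_antisymm ?_ hled
        rw [he]
        exact_mod_cast hqle
      obtain ⟨m, hm, hmS, j, haj, hjb, hjh, hahj, hhjb, hmj, hkmj⟩ :=
        hsplit k' (le_trans hk' hk) q hqw hqinj heq
      have step1 : (⨅ (j : ℕ) (_ : a ≤ j ∧ j ≤ b ∧ j ≤ h ∧ a ≤ h - j ∧ h - j ≤ b)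
          (x : V) (_ : x ∈ S), dLe E w j s₁ x + dLe E w (h - j) x s₂)
          ≤ dLe E w j s₁ (q m) + dLe E w (h - j) (q m) s₂ :=
        iInf_le_of_le j (iInf_le_of_le ⟨haj, hjb, hjh, hahj, hhjb⟩
          (iInf_le_of_le (q m) (iInf_le_of_le hmS le_rfl)))
      refine le_trans step1 ?_
      have hpre : dLe E w j s₁ (q m) ≤ ((walkWeight w m q : ℝ) : EReal) :=
        dLe_le E w hmj (walk_prefix hqw hm)
      have hsuf : dLe E w (h - j) (q m) s₂
          ≤ ((walkWeight w (k' - m) (fun n => q (n + m)) : ℝ) : EReal) :=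
        dLe_le E w hkmj (walk_suffix hqw hm)
      calc dLe E w j s₁ (q m) + dLe E w (h - j) (q m) s₂
          ≤ ((walkWeight w m q : ℝ) : EReal)
            + ((walkWeight w (k' - m) (fun n => q (n + m)) : ℝ) : EReal) :=
            add_le_add hpre hsuf
        _ = ((walkWeight w k' q : ℝ) : EReal) := by
            rw [← EReal.coe_add, ← walkWeight_split w q hm]
        _ = dLe E w h s₁ s₂ := heq
end

section
/- For every integer \ell \ge 1 there exists a directed graph (in fact a tree with edges oriented toward the root) with O(\ell \cdot 2^\ell) vertices, a designated sink v and 2^\ell designated sources u_1,...,u_{2^\ell}, and positive integer weights in {1,2}, such that for every i \in [2^\ell]: there is a unique directed path from u_i to v; this path has exactly 2^\ell - 1 edges; and its total weight is i + 2^\ell - 2. -/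
open scoped BigOperators

/-! ### Auxiliary construction -/

namespace Stmt11Aux

/-- successor function on vertex codes.  Code `0` is the root; code
`1 + h*2^L + x` (with `h < L`, `x < 2^L`) is the vertex at height-`h` chain:
tree index `m = x / 2^h`, position `j = x % 2^h` along the chain. -/
def fN (L a : ℕ) : ℕ :=
  if a = 0 then 0 else
    let h := (a - 1) / 2 ^ L
    let x := (a - 1) % 2 ^ L
    if x % 2 ^ h + 1 < 2 ^ h then a + 1
    else if h + 1 < L then 1 + (h + 1) * 2 ^ L + 2 ^ (h + 1) * (x / 2 ^ (h + 1))
    else 0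

/-- weight of the outgoing edge of a vertex. -/
def gN (L a : ℕ) : ℕ := 1 + ((a - 1) % 2 ^ L / 2 ^ ((a - 1) / 2 ^ L)) % 2

/-- vertex on the path from leaf `i` after `t` steps. -/
def P (L i t : ℕ) : ℕ :=
  if t < 2 ^ L - 1 then
    1 + Nat.log 2 (t + 1) * 2 ^ L +
      (i / 2 ^ Nat.log 2 (t + 1) * 2 ^ Nat.log 2 (t + 1) + (t + 1 - 2 ^ Nat.log 2 (t + 1)))
  else 0

lemma decode_div {L h x : ℕ} (hh : h < L) (hx : x < 2 ^ L) :
    (1 + h * 2 ^ L + x - 1) / 2 ^ L = h := by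
  have : 1 + h * 2 ^ L + x - 1 = 2 ^ L * h + x := by ring_nf; omega
  rw [this, Nat.mul_add_div (Nat.pow_pos (n := L) (by norm_num)), Nat.div_eq_of_lt hx]
  omega

lemma decode_mod {L h x : ℕ} (hx : x < 2 ^ L) :
    (1 + h * 2 ^ L + x - 1) % 2 ^ L = x := by
  have : 1 + h * 2 ^ L + x - 1 = 2 ^ L * h + x := by ring_nf; omega
  rw [this, Nat.mul_add_mod, Nat.mod_eq_of_lt hx]

lemma xlt {L i t : ℕ} (hi : i < 2 ^ L) (hh : Nat.log 2 (t + 1) < L)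
    (hj : t + 1 - 2 ^ Nat.log 2 (t + 1) < 2 ^ Nat.log 2 (t + 1)) :
    i / 2 ^ Nat.log 2 (t + 1) * 2 ^ Nat.log 2 (t + 1) + (t + 1 - 2 ^ Nat.log 2 (t + 1))
      < 2 ^ L := by
  set h := Nat.log 2 (t + 1) with hdef
  have hpos : 0 < 2 ^ h := Nat.pow_pos (n := h) (by norm_num)
  have hpow : 2 ^ (L - h) * 2 ^ h = 2 ^ L := by rw [← pow_add]; congr 1; omega
  have hq : i / 2 ^ h < 2 ^ (L - h) := (Nat.div_lt_iff_lt_mul hpos).mpr (by omega)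
  have h5 : (i / 2 ^ h + 1) * 2 ^ h ≤ 2 ^ (L - h) * 2 ^ h :=
    Nat.mul_le_mul_right _ (Nat.succ_le_of_lt hq)
  have h6 : (i / 2 ^ h + 1) * 2 ^ h = i / 2 ^ h * 2 ^ h + 2 ^ h := by ring
  omega

lemma log_lt {L t : ℕ} (ht : t < 2 ^ L - 1) : Nat.log 2 (t + 1) < L := by
  have h1 : 1 ≤ 2 ^ L := Nat.one_le_two_pow
  exact Nat.log_lt_of_lt_pow (by omega) (by omega)

lemma log_bounds (t : ℕ) :
    2 ^ Nat.log 2 (t + 1) ≤ t + 1 ∧ t + 1 < 2 ^ (Nat.log 2 (t + 1) + 1) :=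
  ⟨Nat.pow_log_le_self 2 (by omega), Nat.lt_pow_succ_log_self (by norm_num) _⟩

end Stmt11Aux

namespace Stmt11Aux


lemma P_step {L i t : ℕ} (hi : i < 2 ^ L) (ht : t < 2 ^ L - 1) :
    fN L (P L i t) = P L i (t + 1) := by
  obtain ⟨hb1, hb2⟩ := log_bounds t
  set h := Nat.log 2 (t + 1) with hdef
  have hhL : h < L := log_lt ht
  have hpos : 0 < 2 ^ h := Nat.pow_pos (n := h) (by norm_num)
  have h2 : (2:ℕ) ^ (h + 1) = 2 ^ h * 2 := pow_succ 2 h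
  have hj : t + 1 - 2 ^ h < 2 ^ h := by omega
  set q := i / 2 ^ h with hq
  set j := t + 1 - 2 ^ h with hjdef
  set x := q * 2 ^ h + j with hx
  have hxlt : x < 2 ^ L := xlt hi hhL hj
  have hPt : P L i t = 1 + h * 2 ^ L + x := by rw [P, if_pos ht]
  have hxmod : x % 2 ^ h = j := by rw [hx, mul_comm, Nat.mul_add_mod, Nat.mod_eq_of_lt hj]
  rw [hPt, fN, if_neg (by omega : ¬ 1 + h * 2 ^ L + x = 0)]
  simp only [decode_div hhL hxlt, decode_mod hxlt, hxmod]
  by_cases hA : j + 1 < 2 ^ h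
  · rw [if_pos hA]
    have hlt : t + 1 < 2 ^ L - 1 := by
      by_contra hcon
      have he : t + 2 = 2 ^ L := by omega
      have h2L : 2 ^ L < 2 ^ (h + 1) := by omega
      have := (Nat.pow_lt_pow_iff_right (by norm_num : (1:ℕ) < 2)).mp h2L
      omega
    have hlog2 : Nat.log 2 (t + 1 + 1) = h :=
      Nat.log_eq_of_pow_le_of_lt_pow (by omega) (by omega)
    rw [P, if_pos hlt, hlog2, ← hq]
    omega
  · rw [if_neg hA]
    have hjval : j = 2 ^ h - 1 := by omega
    have ht2 : t + 1 + 1 = 2 ^ (h + 1) := by omega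
    by_cases hB : h + 1 < L
    · rw [if_pos hB]
      have hlt : t + 1 < 2 ^ L - 1 := by
        have := Nat.pow_lt_pow_right (by norm_num : (1:ℕ) < 2) hB
        omega
      have hlog2 : Nat.log 2 (t + 1 + 1) = h + 1 := by rw [ht2, Nat.log_pow (by norm_num)]
      have hxdiv : x / 2 ^ (h + 1) = q / 2 := by
        have e1 : (q + 1) * 2 ^ h = q * 2 ^ h + 2 ^ h := by ring
        have e2 : q / 2 * 2 ^ (h + 1) = q / 2 * 2 * 2 ^ h := by rw [h2]; ring
        have e3 : (q / 2 + 1) * 2 ^ (h + 1) = (q / 2 * 2 + 2) * 2 ^ h := by rw [h2]; ring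
        have l1 : q / 2 * 2 ≤ q := by omega
        have l2 : q + 1 ≤ q / 2 * 2 + 2 := by omega
        have m1 := Nat.mul_le_mul_right (2 ^ h) l1
        have m2 := Nat.mul_le_mul_right (2 ^ h) l2
        have lb : q / 2 * 2 ^ (h + 1) ≤ x := by omega
        have ub : x < (q / 2 + 1) * 2 ^ (h + 1) := by omega
        exact Nat.div_eq_of_lt_le lb ub
      have hidiv : i / 2 ^ (h + 1) = q / 2 := by
        rw [hq, Nat.div_div_eq_div_mul, ← h2]
      rw [P, if_pos hlt, hlog2, hidiv, hxdiv, ht2]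
      have hm : 2 ^ (h + 1) * (q / 2) = q / 2 * 2 ^ (h + 1) := mul_comm _ _
      omega
    · rw [if_neg hB]
      have hLe : h + 1 = L := by omega
      have hlast : ¬ t + 1 < 2 ^ L - 1 := by rw [← hLe]; omega
      rw [P, if_neg hlast]

lemma P_weight {L i t : ℕ} (hi : i < 2 ^ L) (ht : t < 2 ^ L - 1) :
    gN L (P L i t) = 1 + (i / 2 ^ Nat.log 2 (t + 1)) % 2 := by
  obtain ⟨hb1, hb2⟩ := log_bounds t
  set h := Nat.log 2 (t + 1) with hdef
  have hhL : h < L := log_lt ht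
  have hpos : 0 < 2 ^ h := Nat.pow_pos (n := h) (by norm_num)
  have hj : t + 1 - 2 ^ h < 2 ^ h := by omega
  set q := i / 2 ^ h with hq
  set j := t + 1 - 2 ^ h with hjdef
  set x := q * 2 ^ h + j with hx
  have hxlt : x < 2 ^ L := xlt hi hhL hj
  have hPt : P L i t = 1 + h * 2 ^ L + x := by rw [P, if_pos ht]
  have hxdiv : x / 2 ^ h = q := by
    rw [hx, mul_comm, Nat.mul_add_div hpos, Nat.div_eq_of_lt hj]
    omega
  rw [hPt, gN, decode_div hhL hxlt, decode_mod hxlt, hxdiv]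

end Stmt11Aux

namespace Stmt11Aux

lemma P_lt {L i t : ℕ} (hi : i < 2 ^ L) : P L i t < L * 2 ^ L + 1 := by
  rw [P]
  split
  · next ht =>
    obtain ⟨hb1, hb2⟩ := log_bounds t
    have hhL : Nat.log 2 (t + 1) < L := log_lt ht
    have hpos : 0 < 2 ^ Nat.log 2 (t + 1) := Nat.pow_pos (by norm_num)
    have hj : t + 1 - 2 ^ Nat.log 2 (t + 1) < 2 ^ Nat.log 2 (t + 1) := by omega
    have hxlt := xlt hi hhL hj
    have hm : Nat.log 2 (t + 1) * 2 ^ L + 2 ^ L ≤ L * 2 ^ L := by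
      have h1 : (Nat.log 2 (t + 1) + 1) * 2 ^ L ≤ L * 2 ^ L :=
        Nat.mul_le_mul_right _ (by omega)
      have e : (Nat.log 2 (t + 1) + 1) * 2 ^ L = Nat.log 2 (t + 1) * 2 ^ L + 2 ^ L := by ring
      omega
    omega
  · positivity

lemma P_ne_zero {L i t : ℕ} (ht : t < 2 ^ L - 1) : P L i t ≠ 0 := by
  rw [P, if_pos ht]; omega

lemma P_zero {L i : ℕ} (hL : 1 ≤ L) : P L i 0 = 1 + i := by
  have h2 : (2:ℕ) ≤ 2 ^ L := by
    calc (2:ℕ) = 2 ^ 1 := rfl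
    _ ≤ 2 ^ L := Nat.pow_le_pow_right (by norm_num) hL
  rw [P, if_pos (by omega)]
  simp [Nat.log_one_right]

lemma P_last {L i : ℕ} : P L i (2 ^ L - 1) = 0 := by
  rw [P, if_neg (lt_irrefl _)]

lemma gN_mem {L a : ℕ} : gN L a = 1 ∨ gN L a = 2 := by
  rw [gN]
  rcases Nat.mod_two_eq_zero_or_one ((a - 1) % 2 ^ L / 2 ^ ((a - 1) / 2 ^ L)) with h | h <;>
    rw [h] <;> simp

lemma sum_weights (L : ℕ) :
    ∀ i, ∑ t ∈ Finset.range (2 ^ L - 1), (1 + (i / 2 ^ Nat.log 2 (t + 1)) % 2)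
      = 2 ^ L - 1 + i % 2 ^ L := by
  induction L with
  | zero => intro i; simp [Nat.mod_one]
  | succ L ih =>
    intro i
    have h1 : (1:ℕ) ≤ 2 ^ L := Nat.one_le_two_pow
    have hps : (2:ℕ) ^ (L + 1) = 2 ^ L * 2 := pow_succ 2 L
    have key : 2 ^ (L + 1) - 1 = (2 ^ L - 1) + 2 ^ L := by omega
    rw [key, Finset.range_eq_Ico,
      ← Finset.sum_Ico_consecutive _ (Nat.zero_le (2 ^ L - 1)) (by omega : 2 ^ L - 1 ≤ 2 ^ L - 1 + 2 ^ L)]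
    have hconst : ∑ t ∈ Finset.Ico (2 ^ L - 1) (2 ^ L - 1 + 2 ^ L),
        (1 + (i / 2 ^ Nat.log 2 (t + 1)) % 2) = 2 ^ L * (1 + (i / 2 ^ L) % 2) := by
      rw [Finset.sum_congr rfl (fun t htm => ?_), Finset.sum_const, Nat.card_Ico, smul_eq_mul]
      · congr 1; omega
      · rw [Finset.mem_Ico] at htm
        have hlog : Nat.log 2 (t + 1) = L :=
          Nat.log_eq_of_pow_le_of_lt_pow (by omega) (by omega)
        rw [hlog]
    rw [hconst, ← Finset.range_eq_Ico, ih i]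
    have hmod : i % 2 ^ (L + 1) = i % 2 ^ L + 2 ^ L * (i / 2 ^ L % 2) := by
      rw [hps, Nat.mod_mul]
    have hml : i % 2 ^ L < 2 ^ L := Nat.mod_lt _ (by positivity)
    rcases Nat.mod_two_eq_zero_or_one (i / 2 ^ L) with h | h <;> rw [h] at hmod ⊢ <;> omega

lemma walk_unique {n : ℕ} {F : ℕ → ℕ} {v : Fin n} (hv : (v : ℕ) = 0)
    {s : Fin n} {k k' : ℕ} {p p' : ℕ → Fin n}
    (hp : IsWalk (fun a b : Fin n => (a : ℕ) ≠ 0 ∧ (b : ℕ) = F a) k p s v)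
    (hp' : IsWalk (fun a b : Fin n => (a : ℕ) ≠ 0 ∧ (b : ℕ) = F a) k' p' s v) :
    k = k' ∧ ∀ m ≤ k, p m = p' m := by
  obtain ⟨h0, hk, hstep⟩ := hp
  obtain ⟨h0', hk', hstep'⟩ := hp'
  have key : ∀ m, m ≤ k → m ≤ k' → p m = p' m := by
    intro m
    induction m with
    | zero => intro _ _; rw [h0, h0']
    | succ m ihm =>
      intro hm1 hm2
      have e := ihm (by omega) (by omega)
      have a1 := hstep m (by omega)
      have a2 := hstep' m (by omega)
      apply Fin.ext
      rw [a1.2, a2.2, e]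
  have hkk : k = k' := by
    by_contra hne
    rcases Nat.lt_or_ge k k' with hlt | hge
    · have he : p' k = v := (key k le_rfl (by omega)).symm.trans hk
      have hc := hstep' k (by omega)
      rw [he] at hc
      exact hc.1 hv
    · have he : p k' = v := (key k' (by omega) le_rfl).trans hk'
      have hc := hstep k' (by omega)
      rw [he] at hc
      exact hc.1 hv
  exact ⟨hkk, fun m hm => key m hm (by omega)⟩

lemma weight_congr {V : Type*} (w : V → V → ℝ) {k : ℕ} {p p' : ℕ → V}
    (h : ∀ m ≤ k, p m = p' m) : walkWeight w k p = walkWeight w k p' := by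
  refine Finset.sum_congr rfl fun m hm => ?_
  rw [Finset.mem_range] at hm
  rw [h m (by omega), h (m + 1) (by omega)]

end Stmt11Aux

theorem stmt11 : ∃ c : ℕ, ∀ ℓ : ℕ, 1 ≤ ℓ →
    ∃ (n : ℕ) (E : Fin n → Fin n → Prop) (w : Fin n → Fin n → ℝ)
      (v : Fin n) (u : Fin (2 ^ ℓ) → Fin n),
      n ≤ c * ℓ * 2 ^ ℓ ∧
      (∀ a b, E a b → w a b = 1 ∨ w a b = 2) ∧
      ∀ i : Fin (2 ^ ℓ),
        -- there is a path from `u i` to `v` with exactly `2^ℓ - 1` edges and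
        -- weight `(i+1) + 2^ℓ - 2` (sources are 1-indexed)
        (∃ p : ℕ → Fin n, IsWalk E (2 ^ ℓ - 1) p (u i) v ∧
          walkWeight w (2 ^ ℓ - 1) p = ((i : ℕ) : ℝ) + 1 + 2 ^ ℓ - 2) ∧
        -- every simple path from `u i` to `v` has exactly `2^ℓ - 1` edges and
        -- that same weight
        (∀ k (p : ℕ → Fin n), IsWalk E k p (u i) v →
          Function.Injective (fun m : Fin (k + 1) => p m) →
          k = 2 ^ ℓ - 1 ∧ walkWeight w k p = ((i : ℕ) : ℝ) + 1 + 2 ^ ℓ - 2) ∧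
        -- the path from `u i` to `v` is unique
        (∀ k k' (p p' : ℕ → Fin n), IsWalk E k p (u i) v → IsWalk E k' p' (u i) v →
          Function.Injective (fun m : Fin (k + 1) => p m) →
          Function.Injective (fun m : Fin (k' + 1) => p' m) →
          k = k' ∧ ∀ m ≤ k, p m = p' m) := by
  refine ⟨2, fun L hL => ?_⟩
  have h2L : (2:ℕ) ≤ 2 ^ L := by
    calc (2:ℕ) = 2 ^ 1 := rfl
    _ ≤ 2 ^ L := Nat.pow_le_pow_right (by norm_num) hL
  have hpos : 0 < L * 2 ^ L := Nat.mul_pos (by omega) (by positivity)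
  have hle : 2 ^ L ≤ L * 2 ^ L := Nat.le_mul_of_pos_left _ (by omega)
  set n := L * 2 ^ L + 1 with hn
  refine ⟨n,
    fun a b => (a : ℕ) ≠ 0 ∧ (b : ℕ) = Stmt11Aux.fN L a,
    fun a _ => (Stmt11Aux.gN L (a : ℕ) : ℝ),
    ⟨0, by omega⟩,
    fun i => ⟨1 + (i : ℕ), by have := i.isLt; omega⟩, ?_, ?_, ?_⟩
  · have e : 2 * L * 2 ^ L = L * 2 ^ L + L * 2 ^ L := by ring
    omega
  · intro a b _
    rcases Stmt11Aux.gN_mem (L := L) (a := (a : ℕ)) with h | h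
    · exact Or.inl (by show ((Stmt11Aux.gN L (a : ℕ) : ℝ)) = 1; rw [h]; norm_num)
    · exact Or.inr (by show ((Stmt11Aux.gN L (a : ℕ) : ℝ)) = 2; rw [h]; norm_num)
  · intro i
    have hi : (i : ℕ) < 2 ^ L := i.isLt
    set p₀ : ℕ → Fin n := fun t => ⟨Stmt11Aux.P L (i : ℕ) t, Stmt11Aux.P_lt hi⟩ with hp₀
    have hwalk : IsWalk (fun a b : Fin n => (a : ℕ) ≠ 0 ∧ (b : ℕ) = Stmt11Aux.fN L a)
        (2 ^ L - 1) p₀ ⟨1 + (i : ℕ), by have := i.isLt; omega⟩ ⟨0, by omega⟩ := by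
      refine ⟨?_, ?_, ?_⟩
      · exact Fin.ext (Stmt11Aux.P_zero hL)
      · exact Fin.ext (Stmt11Aux.P_last)
      · intro t ht
        exact ⟨Stmt11Aux.P_ne_zero ht, (Stmt11Aux.P_step hi ht).symm⟩
    have hnat : ∑ t ∈ Finset.range (2 ^ L - 1), Stmt11Aux.gN L (Stmt11Aux.P L (i : ℕ) t)
        = 2 ^ L - 1 + (i : ℕ) := by
      rw [Finset.sum_congr rfl
          (fun t htm => Stmt11Aux.P_weight hi (Finset.mem_range.mp htm)),
        Stmt11Aux.sum_weights L (i : ℕ), Nat.mod_eq_of_lt hi]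
    have hweight : walkWeight (fun (a _ : Fin n) => (Stmt11Aux.gN L (a : ℕ) : ℝ)) (2 ^ L - 1) p₀
        = ((i : ℕ) : ℝ) + 1 + 2 ^ L - 2 := by
      have h1 : walkWeight (fun (a _ : Fin n) => (Stmt11Aux.gN L (a : ℕ) : ℝ)) (2 ^ L - 1) p₀
          = ∑ t ∈ Finset.range (2 ^ L - 1), (Stmt11Aux.gN L (Stmt11Aux.P L (i : ℕ) t) : ℝ) := rfl
      rw [h1, ← Nat.cast_sum, hnat, Nat.cast_add, Nat.cast_sub (by omega : 1 ≤ 2 ^ L)]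
      push_cast
      ring
    refine ⟨⟨p₀, hwalk, hweight⟩, ?_, ?_⟩
    · intro k p hwp _
      obtain ⟨hk, hmeq⟩ := Stmt11Aux.walk_unique rfl hwp hwalk
      subst hk
      exact ⟨rfl, by rw [Stmt11Aux.weight_congr _ hmeq, hweight]⟩
    · intro k k' p p' hwp hwp' _ _
      exact Stmt11Aux.walk_unique rfl hwp hwp'
end

section
/- Correctness of the two-variable polynomial encoding of matrix-sequence min-plus convolution: let A_0,...,A_{m-1} and B_0,...,B_{m-1} be n \times n matrices with entries in {0,...,5M} \cup {+\infty}. Define polynomial matrices \mathbb{A}[i,j] = \sum_{\ell=0}^{m-1} x^\ell y^{A_\ell[i,j]} and \mathbb{B}[i,j] = \sum_{\ell=0}^{m-1} x^\ell y^{B_\ell[i,j]} (omitting infinite-entry terms). Then for every 0 \le z \le 2m-2 and i,j \in [n], the minimum y-degree of a nonzero monomial in the coefficient of x^z in (\mathbb{A}\mathbb{B})[i,j] equals C_z[i,j] := min over x'+y'=z, 0 \le x',y' \le m-1, and k \in [n], of A_{x'}[i,k] + B_{y'}[k,j] (and the coefficient of x^z is the zero polynomial iff C_z[i,j] = +\infty).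 -/
/-- Encoding of a sequence of `n × n` matrices over `ℕ∞` as a single matrix of
two-variable polynomials (outer variable `x` tracks the sequence index, inner
variable `y` tracks the entry value; `⊤` entries are omitted). -/
noncomputable def encode {m n : ℕ} (A : Fin m → Fin n → Fin n → ℕ∞) :
    Fin n → Fin n → Polynomial (Polynomial ℕ) :=
  fun i j => ∑ ℓ : Fin m,
    if h : A ℓ i j = ⊤ then 0
    else Polynomial.C (Polynomial.X ^ ((A ℓ i j).untop h)) * Polynomial.X ^ (ℓ : ℕ)

theorem stmt14 {m n M : ℕ}
    (A B : Fin m → Fin n → Fin n → ℕ∞)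
    (hA : ∀ ℓ i j, A ℓ i j ≤ ((5 * M : ℕ) : ℕ∞) ∨ A ℓ i j = ⊤)
    (hB : ∀ ℓ i j, B ℓ i j ≤ ((5 * M : ℕ) : ℕ∞) ∨ B ℓ i j = ⊤)
    (z : ℕ) (hz : z ≤ 2 * m - 2) (i j : Fin n) :
    -- `q` is the coefficient of `x^z` in the `(i,j)` entry of the matrix product
    -- `𝔸 𝔹`; it is a polynomial in `y`.
    let q : Polynomial ℕ := (∑ k : Fin n, encode A i k * encode B k j).coeff z
    -- `c` is the min-plus-product-convolution value `C_z[i,j]`.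
    let c : ℕ∞ := ⨅ (x' : Fin m) (y' : Fin m) (_ : (x' : ℕ) + (y' : ℕ) = z) (k : Fin n),
      A x' i k + B y' k j
    -- the coefficient of `x^z` is the zero polynomial iff `C_z[i,j] = ⊤`, and
    -- otherwise its minimum `y`-degree nonzero monomial has degree `C_z[i,j]`.
    (q = 0 ↔ c = ⊤) ∧
      ∀ d : ℕ, c = (d : ℕ∞) → q.coeff d ≠ 0 ∧ ∀ e < d, q.coeff e = 0 := by 
  classical
  intro q c
  have term_eq : ∀ (d : ℕ) (k : Fin n) (ℓ ℓ' : Fin m),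
      ((((if h : A ℓ i k = ⊤ then 0
          else Polynomial.C (Polynomial.X ^ ((A ℓ i k).untop h)) * Polynomial.X ^ (ℓ : ℕ)) *
        (if h : B ℓ' k j = ⊤ then 0
          else Polynomial.C (Polynomial.X ^ ((B ℓ' k j).untop h)) * Polynomial.X ^ (ℓ' : ℕ)))
            : Polynomial (Polynomial ℕ)).coeff z).coeff d
      = if A ℓ i k + B ℓ' k j = (d : ℕ∞) ∧ (ℓ : ℕ) + (ℓ' : ℕ) = z then 1 else 0 := by
    intro d k ℓ ℓ'
    by_cases hℓ : A ℓ i k = ⊤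
    · simp [hℓ]
    by_cases hℓ' : B ℓ' k j = ⊤
    · simp [hℓ']
    rw [dif_neg hℓ, dif_neg hℓ']
    obtain ⟨a, hA'⟩ := WithTop.ne_top_iff_exists.mp hℓ
    obtain ⟨b, hB'⟩ := WithTop.ne_top_iff_exists.mp hℓ'
    have ha : (A ℓ i k).untop hℓ = a :=
      WithTop.coe_injective (by exact (WithTop.coe_untop (A ℓ i k) hℓ).trans hA'.symm)
    have hb : (B ℓ' k j).untop hℓ' = b :=
      WithTop.coe_injective (by exact (WithTop.coe_untop (B ℓ' k j) hℓ').trans hB'.symm)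
    rw [ha, hb]
    have : (Polynomial.C (Polynomial.X ^ a : Polynomial ℕ) * Polynomial.X ^ (ℓ : ℕ)) *
        (Polynomial.C (Polynomial.X ^ b) * Polynomial.X ^ (ℓ' : ℕ))
        = Polynomial.C (Polynomial.X ^ (a + b)) * Polynomial.X ^ ((ℓ : ℕ) + (ℓ' : ℕ)) := by
      simp only [pow_add, Polynomial.C_mul]; ring
    rw [this, Polynomial.coeff_C_mul, Polynomial.coeff_X_pow]
    have hA2 : A ℓ i k = ((a : ℕ) : ℕ∞) := by exact_mod_cast hA'.symm
    have hB2 : B ℓ' k j = ((b : ℕ) : ℕ∞) := by exact_mod_cast hB'.symm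
    have hcond : (A ℓ i k + B ℓ' k j = (d : ℕ∞)) ↔ a + b = d := by
      rw [hA2, hB2]; norm_cast
    simp only [hcond]
    by_cases hzz : (ℓ : ℕ) + (ℓ' : ℕ) = z
    · simp only [hzz, if_pos rfl, mul_one, Polynomial.coeff_X_pow]
      by_cases hd : a + b = d
      · simp [hd]
      · simp [hd, Ne.symm hd]
    · simp [hzz, Ne.symm hzz]
  have key : ∀ d : ℕ, q.coeff d =
      ∑ k : Fin n, ∑ ℓ : Fin m, ∑ ℓ' : Fin m,
        if A ℓ i k + B ℓ' k j = (d : ℕ∞) ∧ (ℓ : ℕ) + (ℓ' : ℕ) = z then 1 else 0 := by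
    intro d
    show ((∑ k : Fin n, encode A i k * encode B k j).coeff z).coeff d = _
    rw [Polynomial.finset_sum_coeff, Polynomial.finset_sum_coeff]
    refine Finset.sum_congr rfl fun k _ => ?_
    unfold encode
    rw [Finset.sum_mul_sum, Polynomial.finset_sum_coeff, Polynomial.finset_sum_coeff]
    refine Finset.sum_congr rfl fun ℓ _ => ?_
    rw [Polynomial.finset_sum_coeff, Polynomial.finset_sum_coeff]
    exact Finset.sum_congr rfl fun ℓ' _ => term_eq d k ℓ ℓ'
  have hzero : ∀ d : ℕ, q.coeff d = 0 ↔
      ∀ (x' y' : Fin m) (k : Fin n), (x' : ℕ) + (y' : ℕ) = z →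
        A x' i k + B y' k j ≠ (d : ℕ∞) := by
    intro d
    rw [key d]
    simp only [Finset.sum_eq_zero_iff, Finset.mem_univ, forall_true_left, ite_eq_right_iff,
      one_ne_zero, imp_false, not_and]
    constructor
    · intro h x' y' k hxy hv
      exact h k x' y' hv hxy
    · intro h k x' y' hv hxy
      exact h x' y' k hxy hv
  have hc_le : ∀ (x' y' : Fin m), (x' : ℕ) + (y' : ℕ) = z → ∀ (k : Fin n),
      c ≤ A x' i k + B y' k j := fun x' y' h k =>
    iInf_le_of_le x' (iInf_le_of_le y' (iInf_le_of_le h (iInf_le _ k)))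
  constructor
  · constructor
    · intro hq0
      simp only [c, iInf_eq_top]
      intro x' y' hxy k
      by_contra hne
      obtain ⟨v, hv⟩ := WithTop.ne_top_iff_exists.mp hne
      have := (hzero v).mp (by rw [hq0]; simp) x' y' k hxy
      exact this hv.symm
    · intro hc
      simp only [c, iInf_eq_top] at hc
      ext d
      rw [Polynomial.coeff_zero, hzero d]
      intro x' y' k hxy hv
      rw [hc x' y' hxy k] at hv
      exact (WithTop.top_ne_coe) hv
  · intro d hcd
    have hlt : c < (d : ℕ∞) + 1 := by
      rw [hcd]; exact_mod_cast Nat.lt_succ_self d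
    simp only [c, iInf_lt_iff] at hlt
    obtain ⟨x', y', hxy, k, hk⟩ := hlt
    have hge : (d : ℕ∞) ≤ A x' i k + B y' k j := hcd ▸ hc_le x' y' hxy k
    have heq : A x' i k + B y' k j = (d : ℕ∞) := by
      have : A x' i k + B y' k j ≤ (d : ℕ∞) := by
        exact Order.le_of_lt_add_one hk
      exact le_antisymm this hge
    constructor
    · intro h0
      exact (hzero d).mp h0 x' y' k hxy heq
    · intro e he
      rw [hzero e]
      intro x'' y'' k'' hxy'' hv
      have : c ≤ (e : ℕ∞) := hv ▸ hc_le x'' y'' hxy'' k''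
      rw [hcd] at this
      exact absurd (Nat.cast_le.mp this) (Nat.not_le.mpr he)
end

section
/- Single-source hop recurrence with sampled intermediates: let G be a weighted directed graph with no negative cycles, s a vertex, S a set of vertices, and b \ge 1 an integer. Suppose that for every vertex v and every h > b, some simple path p achieving d_{\le h}(s,v) with |p| > b contains a vertex of S among its last b vertices (excluding v itself, within the last b hops). Then for every v and h > b: d_{\le h}(s,v) = min( d_{\le b}(s,v), min over h' \in [b] and u \in S of ( d_{\le h-h'}(s,u) + d_{h'}(u,v) ) ), where d_{h'} denotes exactly-h'-hop distance. -/
open scoped BigOperators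

section Aux

variable {V : Type*} {E : V → V → Prop} {w : V → V → ℝ}

/-- lower bound on weights of walks with at most `h` edges -/
lemma walkWeight_lb (w : V → V → ℝ) {M : ℝ} (hM : ∀ u v, M ≤ w u v)
    {k h : ℕ} (hk : k ≤ h) (p : ℕ → V) :
    (h : ℝ) * min M 0 ≤ walkWeight w k p := by
  have h1 : (k : ℝ) * min M 0 ≤ walkWeight w k p := by
    unfold walkWeight
    calc (k : ℝ) * min M 0 = ∑ _i ∈ Finset.range k, min M 0 := by
          simp [Finset.sum_const, mul_comm]
      _ ≤ _ := Finset.sum_le_sum fun i _ => (min_le_left _ _).trans (hM _ _)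
  refine le_trans ?_ h1
  exact mul_le_mul_of_nonpos_right (by exact_mod_cast hk) (min_le_right M 0)

lemma dLe_lb {M : ℝ} (hM : ∀ u v, M ≤ w u v) (h : ℕ) (s t : V) :
    (((h : ℝ) * min M 0 : ℝ) : EReal) ≤ dLe E w h s t := by
  refine le_sInf ?_
  rintro x ⟨k, hk, p, hp, rfl⟩
  exact_mod_cast walkWeight_lb w hM hk p

lemma dExact_lb {M : ℝ} (hM : ∀ u v, M ≤ w u v) (h : ℕ) (s t : V) :
    (((h : ℝ) * min M 0 : ℝ) : EReal) ≤ dExact E w h s t := by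
  refine le_sInf ?_
  rintro x ⟨p, hp, rfl⟩
  exact_mod_cast walkWeight_lb w hM le_rfl p

lemma dLe_ne_bot {M : ℝ} (hM : ∀ u v, M ≤ w u v) (h : ℕ) (s t : V) :
    dLe E w h s t ≠ ⊥ :=
  ((EReal.bot_lt_coe _).trans_le (dLe_lb hM h s t)).ne'

lemma dExact_ne_bot {M : ℝ} (hM : ∀ u v, M ≤ w u v) (h : ℕ) (s t : V) :
    dExact E w h s t ≠ ⊥ :=
  ((EReal.bot_lt_coe _).trans_le (dExact_lb hM h s t)).ne'

/-- Concatenation of walks -/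
lemma walk_append {k l : ℕ} {p q : ℕ → V} {s u v : V}
    (hp : IsWalk E k p s u) (hq : IsWalk E l q u v) :
    ∃ r : ℕ → V, IsWalk E (k + l) r s v ∧
      walkWeight w (k + l) r = walkWeight w k p + walkWeight w l q := by
  classical
  set r : ℕ → V := fun i => if i ≤ k then p i else q (i - k) with hrdef
  have hpi : ∀ i, i ≤ k → r i = p i := fun i hi => by simp [hrdef, hi]
  have hri : ∀ i, k ≤ i → r i = q (i - k) := by
    intro i hi
    rcases eq_or_lt_of_le hi with h' | h'
    · rw [← h', hpi _ le_rfl, hp.2.1, ← hq.1, Nat.sub_self]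
    · simp [hrdef, not_le.2 h']
  have hwq : ∀ i, w (r (k + i)) (r (k + i + 1)) = w (q i) (q (i + 1)) := by
    intro i
    rw [hri _ (by omega), hri _ (by omega)]
    have e1 : k + i - k = i := by omega
    have e2 : k + i + 1 - k = i + 1 := by omega
    rw [e1, e2]
  refine ⟨r, ⟨?_, ?_, ?_⟩, ?_⟩
  · rw [hpi _ (Nat.zero_le _)]; exact hp.1
  · rw [hri _ (Nat.le_add_right _ _), Nat.add_sub_cancel_left]; exact hq.2.1
  · intro i hi
    by_cases h' : i < k
    · rw [hpi _ h'.le, hpi _ (Nat.succ_le_of_lt h')]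
      exact hp.2.2 i h'
    · push_neg at h'
      rw [hri _ h', hri _ (h'.trans (Nat.le_succ _))]
      have e : i + 1 - k = (i - k) + 1 := by omega
      rw [e]
      exact hq.2.2 _ (by omega)
  · unfold walkWeight
    rw [Finset.sum_range_add]
    congr 1
    · refine Finset.sum_congr rfl fun i hi => ?_
      simp only [Finset.mem_range] at hi
      rw [hpi _ hi.le, hpi _ (Nat.succ_le_of_lt hi)]
    · exact Finset.sum_congr rfl fun i _ => hwq i

/-- Key upper bound: concatenation inequality. -/
lemma dLe_le_add {M : ℝ} (hM : ∀ u v, M ≤ w u v) {h h' : ℕ} (hh' : h' ≤ h)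
    (s u v : V) :
    dLe E w h s v ≤ dLe E w (h - h') s u + dExact E w h' u v := by
  by_cases hA : dLe E w (h - h') s u = ⊤
  · rw [hA, EReal.top_add_of_ne_bot (dExact_ne_bot hM h' u v)]
    exact le_top
  by_cases hB : dExact E w h' u v = ⊤
  · rw [hB, EReal.add_top_of_ne_bot (dLe_ne_bot hM (h - h') s u)]
    exact le_top
  -- both finite; lift to ℝ
  lift dLe E w (h - h') s u to ℝ using ⟨hA, dLe_ne_bot hM (h - h') s u⟩ with a ha
  lift dExact E w h' u v to ℝ using ⟨hB, dExact_ne_bot hM h' u v⟩ with c hc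
  -- the sets are nonempty
  have hAne : {x : EReal | ∃ k ≤ h - h', ∃ p : ℕ → V,
      IsWalk E k p s u ∧ x = (walkWeight w k p : ℝ)}.Nonempty := by
    rw [Set.nonempty_iff_ne_empty]
    intro hcon
    rw [dLe, hcon, sInf_empty] at ha
    exact hA ha
  have hBne : {x : EReal | ∃ p : ℕ → V,
      IsWalk E h' p u v ∧ x = (walkWeight w h' p : ℝ)}.Nonempty := by
    rw [Set.nonempty_iff_ne_empty]
    intro hcon
    rw [dExact, hcon, sInf_empty] at hc
    exact hB hc
  -- c := dLe h s v is real
  obtain ⟨x0, k0, hk0, p0, hp0, rfl⟩ := hAne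
  obtain ⟨y0, q0, hq0, rfl⟩ := hBne
  obtain ⟨r0, hr0, hw0⟩ := walk_append (w := w) hp0 hq0
  have hCle : dLe E w h s v ≤ ((walkWeight w (k0 + h') r0 : ℝ) : EReal) :=
    sInf_le ⟨k0 + h', by omega, r0, hr0, rfl⟩
  have hCtop : dLe E w h s v ≠ ⊤ := fun hcon => by
    rw [hcon] at hCle
    exact (EReal.coe_lt_top _).not_ge hCle
  lift dLe E w h s v to ℝ using ⟨hCtop, dLe_ne_bot hM h s v⟩ with d hd
  rw [← EReal.coe_add, EReal.coe_le_coe_iff]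
  by_contra hcon
  push_neg at hcon
  set ε : ℝ := (d - a - c) / 2 with hε
  have hεpos : 0 < ε := by simp only [hε]; linarith
  have hA2 : dLe E w (h - h') s u < ((a + ε : ℝ) : EReal) := by
    rw [← ha]
    exact_mod_cast (by linarith : a < a + ε)
  have hB2 : dExact E w h' u v < ((c + ε : ℝ) : EReal) := by
    rw [← hc]
    exact_mod_cast (by linarith : c < c + ε)
  rw [dLe, sInf_lt_iff] at hA2
  rw [dExact, sInf_lt_iff] at hB2
  obtain ⟨x, ⟨k, hk, p, hp, rfl⟩, hx⟩ := hA2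
  obtain ⟨y, ⟨q, hq, rfl⟩, hy⟩ := hB2
  obtain ⟨r, hr, hwr⟩ := walk_append (w := w) hp hq
  have h1 : dLe E w h s v ≤ ((walkWeight w (k + h') r : ℝ) : EReal) :=
    sInf_le ⟨k + h', by omega, r, hr, rfl⟩
  rw [← hd] at h1
  rw [EReal.coe_le_coe_iff] at h1
  rw [EReal.coe_lt_coe_iff] at hx hy
  rw [hwr] at h1
  linarith

end Aux

theorem stmt15 {V : Type*} [Fintype V] (E : V → V → Prop) (w : V → V → ℝ)
    (hG : NoNegCycle E w) (s : V) (S : Set V) (b : ℕ) (hb : 1 ≤ b)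
    -- hypothesis: for every `v` and `h > b` with finite distance, some simple
    -- path achieving `dLe h s v` either has at most `b` edges, or contains a
    -- vertex of `S` among its last `b` vertices (excluding `v` itself)
    (hhit : ∀ (v : V) (h : ℕ), b < h → dLe E w h s v ≠ ⊤ →
      ∃ k ≤ h, ∃ p : ℕ → V, IsWalk E k p s v ∧
        Function.Injective (fun i : Fin (k + 1) => p i) ∧
        ((walkWeight w k p : ℝ) : EReal) = dLe E w h s v ∧
        (k ≤ b ∨ ∃ m, k - b ≤ m ∧ m < k ∧ p m ∈ S)) :
    ∀ (v : V) (h : ℕ), b < h →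
      dLe E w h s v =
        min (dLe E w b s v)
          (⨅ (h' : ℕ) (_ : 1 ≤ h') (_ : h' ≤ b) (u : V) (_ : u ∈ S),
            dLe E w (h - h') s u + dExact E w h' u v) := by
  -- a global lower bound on edge weights
  have : Nonempty V := ⟨s⟩
  obtain ⟨⟨u0, v0⟩, hM0⟩ := Finite.exists_min (fun x : V × V => w x.1 x.2)
  set M : ℝ := w u0 v0 with hMdef
  have hM : ∀ u v, M ≤ w u v := fun u v => hM0 (u, v)
  intro v h hbh
  refine le_antisymm (le_min ?_ ?_) ?_
  · -- dLe h ≤ dLe b by monotonicity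
    refine sInf_le_sInf ?_
    rintro x ⟨k, hk, p, hp, rfl⟩
    exact ⟨k, hk.trans hbh.le, p, hp, rfl⟩
  · -- dLe h ≤ each concatenation term
    refine le_iInf fun h' => le_iInf fun h1 => le_iInf fun h2 => le_iInf fun u =>
      le_iInf fun _ => ?_
    exact dLe_le_add hM (h2.trans hbh.le) s u v
  · -- the hard direction, using hhit
    by_cases htop : dLe E w h s v = ⊤
    · rw [htop]; exact le_top
    obtain ⟨k, hk, p, hp, _hinj, hach, hcase⟩ := hhit v h hbh htop
    rcases hcase with hkb | ⟨m, hm1, hm2, hmS⟩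
    · -- short path: bounded by dLe b
      refine le_trans (min_le_left _ _) ?_
      rw [← hach]
      exact sInf_le ⟨k, hkb, p, hp, rfl⟩
    · -- path hitting S near the end
      set h' : ℕ := k - m with hh'
      have h1 : 1 ≤ h' := by omega
      have h2 : h' ≤ b := by omega
      set u : V := p m with hu
      -- prefix walk: s to u with m edges
      have hpre : IsWalk E m p s u :=
        ⟨hp.1, rfl, fun i hi => hp.2.2 i (lt_of_lt_of_le hi hm2.le)⟩
      have hmle : m ≤ h - h' := by omega
      have hd1 : dLe E w (h - h') s u ≤ ((walkWeight w m p : ℝ) : EReal) :=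
        sInf_le ⟨m, hmle, p, hpre, rfl⟩
      -- suffix walk: u to v with h' edges
      have hsuf : IsWalk E h' (fun i => p (m + i)) u v := by
        refine ⟨by simp [hu], ?_, ?_⟩
        · show p (m + h') = v
          have e : m + h' = k := by omega
          rw [e]
          exact hp.2.1
        · intro i hi
          exact hp.2.2 (m + i) (by omega)
      have hd2 : dExact E w h' u v ≤ ((walkWeight w h' (fun i => p (m + i)) : ℝ) : EReal) :=
        sInf_le ⟨fun i => p (m + i), hsuf, rfl⟩
      -- the weights add up to the full walk weight
      have hsplit : walkWeight w m p + walkWeight w h' (fun i => p (m + i))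
          = walkWeight w k p := by
        unfold walkWeight
        have hk' : k = m + h' := by omega
        rw [hk', Finset.sum_range_add]
        rfl
      refine le_trans (min_le_right _ _) ?_
      refine le_trans (iInf_le _ h') ?_
      refine le_trans (iInf_le _ h1) ?_
      refine le_trans (iInf_le _ h2) ?_
      refine le_trans (iInf_le _ u) ?_
      refine le_trans (iInf_le _ hmS) ?_
      calc dLe E w (h - h') s u + dExact E w h' u v
          ≤ ((walkWeight w m p : ℝ) : EReal) +
            ((walkWeight w h' (fun i => p (m + i)) : ℝ) : EReal) := add_le_add hd1 hd2
        _ = ((walkWeight w k p : ℝ) : EReal) := by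
            rw [← EReal.coe_add, hsplit]
        _ = dLe E w h s v := hach
end

section
/- Triangle-detection gadget correctness: let H be a tripartite graph on parts I = {i_1,...,i_n}, J, K. Construct directed G with vertices I_1 \cup J' \cup K' \cup I_2 \cup {s,t}: path s \to i^1_1 \to ... \to i^1_n with all edge weights -1; path i^2_1 \to ... \to i^2_n \to t with all edge weights -1; for each edge (i_p,j) in H an edge (i^1_p, j') of weight 1; for each edge (j,k) an edge (j',k') of weight 1; for each edge (k,i_p) an edge (k', i^2_p) of weight 1. Then every s-to-t path in G has hop-length (n+4)+(p-q) and weight (2-n)-(p-q) for some indices p,q determined by the crossing; consequently d_{\le n+4}(s,t) = 2 - n if and only if H contains a triangle (i.e., there exist p, j \in J, k \in K with (i_p,j),(j,k),(k,i_p) edges of H), and d_{\le n+4}(s,t) > 2-n otherwise. -/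
open scoped BigOperators

/-- Vertices of the triangle-detection gadget: `i1 p` is `i^1_{p+1} ∈ I_1`,
`jv a` is `a' ∈ J'`, `kv b` is `b' ∈ K'`, `i2 q` is `i^2_{q+1} ∈ I_2`,
plus the source `s` and sink `t`. -/
inductive TV (n : ℕ) where
  | i1 : Fin n → TV n
  | jv : Fin n → TV n
  | kv : Fin n → TV n
  | i2 : Fin n → TV n
  | s : TV n
  | t : TV n

/-- Edges of the gadget, built from the tripartite edge relations of `H`. -/
def E18 {n : ℕ} (EIJ EJK EKI : Fin n → Fin n → Prop) : TV n → TV n → Prop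
  | .s, .i1 p => (p : ℕ) = 0
  | .i1 p, .i1 p' => (p : ℕ) + 1 = (p' : ℕ)
  | .i1 p, .jv a => EIJ p a
  | .jv a, .kv b => EJK a b
  | .kv b, .i2 q => EKI b q
  | .i2 q, .i2 q' => (q : ℕ) + 1 = (q' : ℕ)
  | .i2 q, .t => (q : ℕ) = n - 1
  | _, _ => False

/-- Weights of the gadget: the two chain paths `P1`, `P2` have weight `-1`
per edge, and all crossing edges have weight `1`. -/
def w18 {n : ℕ} : TV n → TV n → ℝ
  | .s, .i1 _ => -1
  | .i1 _, .i1 _ => -1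
  | .i2 _, .i2 _ => -1
  | .i2 _, .t => -1
  | _, _ => 1


lemma tail_walk {V : Type*} {Ed : V → V → Prop} {c : ℕ} {p : ℕ → V} {s t : V}
    (h : IsWalk Ed (c+1) p s t) : IsWalk Ed c (fun m => p (m+1)) (p 1) t := by
  obtain ⟨h0, hc, he⟩ := h
  exact ⟨rfl, hc, fun i hi => he (i+1) (by omega)⟩

lemma weight_succ {V : Type*} (w : V → V → ℝ) (c : ℕ) (p : ℕ → V) :
    walkWeight w (c+1) p = w (p 0) (p 1) + walkWeight w c (fun m => p (m+1)) := by
  unfold walkWeight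
  rw [Finset.sum_range_succ']
  ring

lemma i2_walk {n : ℕ} (EIJ EJK EKI : Fin n → Fin n → Prop) :
    ∀ (c : ℕ) (p : ℕ → TV n) (q : Fin n),
      IsWalk (E18 EIJ EJK EKI) c p (TV.i2 q) TV.t →
      (c : ℤ) + (q : ℕ) = n ∧ walkWeight w18 c p = -(c : ℝ) := by
  intro c
  induction c with
  | zero =>
    intro p q h
    exact absurd (h.1.symm.trans h.2.1) (by simp)
  | succ c ih =>
    intro p q h
    have he0 := h.2.2 0 (by omega)
    rw [show (0+1)=1 from rfl, h.1] at he0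
    have htail := tail_walk h
    cases hx : p 1 with
    | i2 q' =>
      rw [hx] at he0 htail
      have he0' : (q : ℕ) + 1 = (q' : ℕ) := he0
      obtain ⟨hc, hw⟩ := ih _ q' htail
      constructor
      · push_cast at hc ⊢; omega
      · rw [weight_succ, h.1, hx, hw]
        show (-1 : ℝ) + _ = _
        push_cast; ring
    | t =>
      rw [hx] at he0 htail
      have he0' : (q : ℕ) = n - 1 := he0
      have hc0 : c = 0 := by
        by_contra hc0
        have h2 := htail.2.2 0 (by omega)
        rw [show ((fun m => p (m+1)) 0) = TV.t from htail.1] at h2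
        cases hy : ((fun m => p (m+1)) (0+1)) <;> rw [hy] at h2 <;> exact h2
      subst hc0
      refine ⟨by have := q.isLt; push_cast; omega, ?_⟩
      rw [weight_succ, h.1, hx]
      show (-1 : ℝ) + walkWeight w18 0 _ = _
      simp [walkWeight]
    | i1 q' => rw [hx] at he0; exact he0.elim
    | jv q' => rw [hx] at he0; exact he0.elim
    | kv q' => rw [hx] at he0; exact he0.elim
    | s => rw [hx] at he0; exact he0.elim

lemma kv_walk {n : ℕ} (EIJ EJK EKI : Fin n → Fin n → Prop) :
    ∀ (c : ℕ) (p : ℕ → TV n) (b : Fin n),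
      IsWalk (E18 EIJ EJK EKI) c p (TV.kv b) TV.t →
      ∃ q : Fin n, EKI b q ∧ (c : ℤ) + (q : ℕ) = n + 1 ∧
        walkWeight w18 c p = 2 - (c : ℝ) := by
  intro c
  cases c with
  | zero => intro p b h; exact absurd (h.1.symm.trans h.2.1) (by simp)
  | succ c =>
    intro p b h
    have he0 := h.2.2 0 (by omega)
    rw [show (0+1)=1 from rfl, h.1] at he0
    have htail := tail_walk h
    cases hx : p 1 with
    | i2 q =>
      rw [hx] at he0 htail
      obtain ⟨hc, hw⟩ := i2_walk EIJ EJK EKI c _ q htail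
      refine ⟨q, he0, by push_cast at hc ⊢; omega, ?_⟩
      rw [weight_succ, h.1, hx, hw]
      show (1 : ℝ) + _ = _
      push_cast; ring
    | i1 x => rw [hx] at he0; exact (he0 : False).elim
    | jv x => rw [hx] at he0; exact (he0 : False).elim
    | kv x => rw [hx] at he0; exact (he0 : False).elim
    | s => rw [hx] at he0; exact (he0 : False).elim
    | t => rw [hx] at he0; exact (he0 : False).elim

lemma jv_walk {n : ℕ} (EIJ EJK EKI : Fin n → Fin n → Prop) :
    ∀ (c : ℕ) (p : ℕ → TV n) (a : Fin n),
      IsWalk (E18 EIJ EJK EKI) c p (TV.jv a) TV.t →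
      ∃ b q : Fin n, EJK a b ∧ EKI b q ∧ (c : ℤ) + (q : ℕ) = n + 2 ∧
        walkWeight w18 c p = 4 - (c : ℝ) := by
  intro c
  cases c with
  | zero => intro p a h; exact absurd (h.1.symm.trans h.2.1) (by simp)
  | succ c =>
    intro p a h
    have he0 := h.2.2 0 (by omega)
    rw [show (0+1)=1 from rfl, h.1] at he0
    have htail := tail_walk h
    cases hx : p 1 with
    | kv b =>
      rw [hx] at he0 htail
      obtain ⟨q, hki, hc, hw⟩ := kv_walk EIJ EJK EKI c _ b htail
      refine ⟨b, q, he0, hki, by push_cast at hc ⊢; omega, ?_⟩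
      rw [weight_succ, h.1, hx, hw]
      show (1 : ℝ) + _ = _
      push_cast; ring
    | i1 x => rw [hx] at he0; exact (he0 : False).elim
    | jv x => rw [hx] at he0; exact (he0 : False).elim
    | i2 x => rw [hx] at he0; exact (he0 : False).elim
    | s => rw [hx] at he0; exact (he0 : False).elim
    | t => rw [hx] at he0; exact (he0 : False).elim

lemma i1_walk {n : ℕ} (EIJ EJK EKI : Fin n → Fin n → Prop) :
    ∀ (c : ℕ) (p : ℕ → TV n) (pp : Fin n),
      IsWalk (E18 EIJ EJK EKI) c p (TV.i1 pp) TV.t →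
      ∃ p' a b q : Fin n, EIJ p' a ∧ EJK a b ∧ EKI b q ∧ (pp : ℕ) ≤ (p' : ℕ) ∧
        (c : ℤ) + (q : ℕ) + (pp : ℕ) = (p' : ℕ) + 3 + n ∧
        walkWeight w18 c p = 6 - (c : ℝ) := by
  intro c
  induction c with
  | zero => intro p pp h; exact absurd (h.1.symm.trans h.2.1) (by simp)
  | succ c ih =>
    intro p pp h
    have he0 := h.2.2 0 (by omega)
    rw [show (0+1)=1 from rfl, h.1] at he0
    have htail := tail_walk h
    cases hx : p 1 with
    | i1 pp' =>
      rw [hx] at he0 htail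
      have he0' : (pp : ℕ) + 1 = (pp' : ℕ) := he0
      obtain ⟨p', a, b, q, hij, hjk, hki, hle, hc, hw⟩ := ih _ pp' htail
      refine ⟨p', a, b, q, hij, hjk, hki, by omega, by push_cast at hc ⊢; omega, ?_⟩
      rw [weight_succ, h.1, hx, hw]
      show (-1 : ℝ) + _ = _
      push_cast; ring
    | jv a =>
      rw [hx] at he0 htail
      obtain ⟨b, q, hjk, hki, hc, hw⟩ := jv_walk EIJ EJK EKI c _ a htail
      refine ⟨pp, a, b, q, he0, hjk, hki, le_refl _, by push_cast at hc ⊢; omega, ?_⟩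
      rw [weight_succ, h.1, hx, hw]
      show (1 : ℝ) + _ = _
      push_cast; ring
    | kv x => rw [hx] at he0; exact (he0 : False).elim
    | i2 x => rw [hx] at he0; exact (he0 : False).elim
    | s => rw [hx] at he0; exact (he0 : False).elim
    | t => rw [hx] at he0; exact (he0 : False).elim

lemma main_walk {n : ℕ} (EIJ EJK EKI : Fin n → Fin n → Prop) :
    ∀ (c : ℕ) (p : ℕ → TV n),
      IsWalk (E18 EIJ EJK EKI) c p TV.s TV.t →
      ∃ p' a b q : Fin n, EIJ p' a ∧ EJK a b ∧ EKI b q ∧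
        (c : ℤ) + (q : ℕ) = n + 4 + (p' : ℕ) ∧
        walkWeight w18 c p = 6 - (c : ℝ) := by
  intro c
  cases c with
  | zero => intro p h; exact absurd (h.1.symm.trans h.2.1) (by simp)
  | succ c =>
    intro p h
    have he0 := h.2.2 0 (by omega)
    rw [show (0+1)=1 from rfl, h.1] at he0
    have htail := tail_walk h
    cases hx : p 1 with
    | i1 p0 =>
      rw [hx] at he0 htail
      have he0' : (p0 : ℕ) = 0 := he0
      obtain ⟨p', a, b, q, hij, hjk, hki, hle, hc, hw⟩ := i1_walk EIJ EJK EKI c _ p0 htail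
      refine ⟨p', a, b, q, hij, hjk, hki, by push_cast at hc ⊢; omega, ?_⟩
      rw [weight_succ, h.1, hx, hw]
      show (-1 : ℝ) + _ = _
      push_cast; ring
    | jv x => rw [hx] at he0; exact (he0 : False).elim
    | kv x => rw [hx] at he0; exact (he0 : False).elim
    | i2 x => rw [hx] at he0; exact (he0 : False).elim
    | s => rw [hx] at he0; exact (he0 : False).elim
    | t => rw [hx] at he0; exact (he0 : False).elim

def gadgetPath (n P : ℕ) (hP : P < n) (a b : Fin n) : ℕ → TV n := fun m =>
  if m = 0 then TV.s
  else if h1 : m ≤ P + 1 then TV.i1 ⟨m - 1, by omega⟩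
  else if m = P + 2 then TV.jv a
  else if m = P + 3 then TV.kv b
  else if h2 : m ≤ n + 3 then TV.i2 ⟨m - 4, by omega⟩
  else TV.t

lemma gp0 {n P : ℕ} (hP : P < n) (a b : Fin n) : gadgetPath n P hP a b 0 = TV.s := by
  simp [gadgetPath]

lemma gpA {n P : ℕ} (hP : P < n) (a b : Fin n) (m : ℕ) (h1 : 1 ≤ m) (h2 : m ≤ P + 1) :
    gadgetPath n P hP a b m = TV.i1 ⟨m - 1, by omega⟩ := by
  unfold gadgetPath
  rw [if_neg (by omega), dif_pos h2]

lemma gpJ {n P : ℕ} (hP : P < n) (a b : Fin n) :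
    gadgetPath n P hP a b (P + 2) = TV.jv a := by
  unfold gadgetPath
  rw [if_neg (by omega), dif_neg (by omega), if_pos rfl]

lemma gpK {n P : ℕ} (hP : P < n) (a b : Fin n) :
    gadgetPath n P hP a b (P + 3) = TV.kv b := by
  unfold gadgetPath
  rw [if_neg (by omega), dif_neg (by omega), if_neg (by omega), if_pos rfl]

lemma gpB {n P : ℕ} (hP : P < n) (a b : Fin n) (m : ℕ) (h1 : P + 4 ≤ m) (h2 : m ≤ n + 3) :
    gadgetPath n P hP a b m = TV.i2 ⟨m - 4, by omega⟩ := by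
  unfold gadgetPath
  rw [if_neg (by omega), dif_neg (by omega), if_neg (by omega), if_neg (by omega), dif_pos h2]

lemma gpT {n P : ℕ} (hP : P < n) (a b : Fin n) (m : ℕ) (h : n + 4 ≤ m) :
    gadgetPath n P hP a b m = TV.t := by
  unfold gadgetPath
  rw [if_neg (by omega), dif_neg (by omega), if_neg (by omega), if_neg (by omega),
    dif_neg (by omega)]

lemma gadget_isWalk {n : ℕ} (EIJ EJK EKI : Fin n → Fin n → Prop)
    (p a b : Fin n) (hij : EIJ p a) (hjk : EJK a b) (hki : EKI b p) :
    IsWalk (E18 EIJ EJK EKI) (n + 4) (gadgetPath n (p : ℕ) p.isLt a b) TV.s TV.t := by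
  have hP := p.isLt
  refine ⟨gp0 _ a b, gpT _ a b _ (le_refl _), ?_⟩
  intro i hi
  by_cases h0 : i = 0
  · subst h0
    rw [gp0, gpA _ a b 1 (by omega) (by omega)]
    show ((⟨0, _⟩ : Fin n) : ℕ) = 0
    rfl
  by_cases hA : i ≤ (p : ℕ)
  · rw [gpA _ a b i (by omega) (by omega), gpA _ a b (i+1) (by omega) (by omega)]
    show (i - 1) + 1 = (i + 1) - 1
    omega
  by_cases hB : i = (p : ℕ) + 1
  · subst hB
    rw [gpA _ a b _ (by omega) (by omega), show (p:ℕ) + 1 + 1 = (p:ℕ) + 2 from rfl, gpJ]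
    show EIJ ⟨(p:ℕ) + 1 - 1, _⟩ a
    have : (⟨(p:ℕ) + 1 - 1, by omega⟩ : Fin n) = p := by
      apply Fin.ext; simp
    rw [this]; exact hij
  by_cases hC : i = (p : ℕ) + 2
  · subst hC
    rw [gpJ, show (p:ℕ) + 2 + 1 = (p:ℕ) + 3 from rfl, gpK]
    exact hjk
  by_cases hD : i = (p : ℕ) + 3
  · subst hD
    rw [gpK, gpB _ a b _ (by omega) (by omega)]
    show EKI b ⟨(p:ℕ) + 3 + 1 - 4, _⟩
    have : (⟨(p:ℕ) + 3 + 1 - 4, by omega⟩ : Fin n) = p := by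
      apply Fin.ext; simp
    rw [this]; exact hki
  by_cases hE : i ≤ n + 2
  · rw [gpB _ a b i (by omega) (by omega), gpB _ a b (i+1) (by omega) (by omega)]
    show (i - 4) + 1 = (i + 1) - 4
    omega
  · have hi3 : i = n + 3 := by omega
    subst hi3
    rw [gpB _ a b _ (by omega) (by omega), gpT _ a b _ (by omega)]
    show n + 3 - 4 = n - 1
    omega

theorem stmt18 {n : ℕ} (hn : 1 ≤ n) (EIJ EJK EKI : Fin n → Fin n → Prop) :
    -- every s-to-t walk has hop-length (n+4)+(p-q) and weight (2-n)-(p-q)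
    (∀ (c : ℕ) (pth : ℕ → TV n), IsWalk (E18 EIJ EJK EKI) c pth TV.s TV.t →
      ∃ p q : Fin n,
        (c : ℤ) = ((n : ℤ) + 4) + (((p : ℕ) : ℤ) + 1 - (((q : ℕ) : ℤ) + 1)) ∧
        walkWeight w18 c pth
          = (2 - (n : ℝ)) - ((((p : ℕ) : ℝ) + 1) - (((q : ℕ) : ℝ) + 1))) ∧
    -- d_{≤ n+4}(s,t) = 2 - n iff H has a triangle
    ((∃ p a b, EIJ p a ∧ EJK a b ∧ EKI b p) →
      dLe (E18 EIJ EJK EKI) w18 (n + 4) TV.s TV.t = ((2 - (n : ℝ) : ℝ) : EReal)) ∧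
    ((¬ ∃ p a b, EIJ p a ∧ EJK a b ∧ EKI b p) →
      ((2 - (n : ℝ) : ℝ) : EReal) < dLe (E18 EIJ EJK EKI) w18 (n + 4) TV.s TV.t) := by
  have main := main_walk EIJ EJK EKI
  refine ⟨?_, ?_, ?_⟩
  · intro c pth h
    obtain ⟨p', a, b, q, _, _, _, hc, hw⟩ := main c pth h
    refine ⟨p', q, by push_cast at hc ⊢; omega, ?_⟩
    have hcr : (c : ℝ) + ((q : ℕ) : ℝ) = (n : ℝ) + 4 + ((p' : ℕ) : ℝ) := by
      exact_mod_cast hc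
    rw [hw]; linarith
  · rintro ⟨p, a, b, hij, hjk, hki⟩
    have hwalk := gadget_isWalk EIJ EJK EKI p a b hij hjk hki
    obtain ⟨p', a', b', q', _, _, _, hc, hw⟩ := main _ _ hwalk
    have hw' : walkWeight w18 (n + 4) (gadgetPath n (p : ℕ) p.isLt a b) = 2 - (n : ℝ) := by
      rw [hw]; push_cast; ring
    apply le_antisymm
    · apply sInf_le
      exact ⟨n + 4, le_refl _, _, hwalk, by rw [hw']⟩
    · apply le_sInf
      rintro x ⟨k, hk, pp, hwalkk, rfl⟩
      obtain ⟨p2, a2, b2, q2, _, _, _, hc2, hw2⟩ := main k pp hwalkk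
      rw [hw2, EReal.coe_le_coe_iff]
      have hkr : (k : ℝ) ≤ (n : ℝ) + 4 := by exact_mod_cast hk
      linarith
  · intro htri
    have h3 : ((2 - (n : ℝ) : ℝ) : EReal) < ((3 - (n : ℝ) : ℝ) : EReal) := by
      rw [EReal.coe_lt_coe_iff]; linarith
    refine lt_of_lt_of_le h3 ?_
    apply le_sInf
    rintro x ⟨k, hk, pp, hwalkk, rfl⟩
    obtain ⟨p2, a2, b2, q2, hij, hjk, hki, hc2, hw2⟩ := main k pp hwalkk
    have hne : (p2 : ℕ) ≠ (q2 : ℕ) := fun he =>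
      htri ⟨p2, a2, b2, hij, hjk, by rwa [show q2 = p2 from Fin.ext he.symm] at hki⟩
    have hlt : (p2 : ℕ) < (q2 : ℕ) := by
      have hk' : (k : ℤ) ≤ (n : ℤ) + 4 := by exact_mod_cast hk
      push_cast at hc2; omega
    rw [hw2, EReal.coe_le_coe_iff]
    have hcr : (k : ℝ) + ((q2 : ℕ) : ℝ) = (n : ℝ) + 4 + ((p2 : ℕ) : ℝ) := by
      exact_mod_cast hc2
    have hlt' : ((p2 : ℕ) : ℝ) + 1 ≤ ((q2 : ℕ) : ℝ) := by exact_mod_cast hlt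
    linarith
end
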